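/- Let N be an odd positive integer and for n ∈ {1,…,N} set c_n = n − 1 − (N−1)/2. Let L_s, L_r > 0 and let g : ℝ → ℂ be continuous and integrable, with Fourier transform G(κ) = ∫_ℝ g(z) e^{−iκz} dz also integrable. Then for all n, m ∈ {1,…,N}, ∫_{−L_r/2}^{L_r/2} ∫_{−L_s/2}^{L_s/2} g(r − s) · e^{−i 2π c_n r/L_s} · (1/√L_s) e^{i 2π c_m s/L_s} ds dr = (√L_s · L_r/(2π)) ∫_ℝ G(κ) · sinc((κ/(2π) − c_n/L_s)·L_r) · sinc((κ/(2π) − c_m/L_s)·L_s) dκ. -/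

import Mathlib

/-! Fourier inversion writes `g (r - s)` as `(2π)⁻¹ ∫ G κ e^{iκr} e^{-iκs} dκ`. Since `G` and the
two windowed Fourier modes are integrable, Fubini moves the `κ`-integral outside, leaving `G κ`
times the finite Fourier transforms of the two modes over their windows; the transform of a
plane wave over a window of length `L` is `L` times a sinc. -/

open MeasureTheory Filter Real

/-- The normalized sinc function: `sinc x = sin (π x) / (π x)` for `x ≠ 0`, `sinc 0 = 1`. -/
noncomputable def sinc (x : ℝ) : ℝ :=
  if x = 0 then 1 else Real.sin (π * x) / (π * x)

theorem sinc_eq_real_sinc (x : ℝ) : _root_.sinc x = Real.sinc (π * x) := by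
  by_cases hx : x = 0
  · simp [_root_.sinc, hx]
  · simp [_root_.sinc, hx, Real.sinc_of_ne_zero, pi_ne_zero]

theorem sinc_neg (x : ℝ) : _root_.sinc (-x) = _root_.sinc x := by
  simp [sinc_eq_real_sinc]

theorem integral_cexp_two_pi_mul_I_eq_mul_sinc (L ξ : ℝ) :
    ∫ x in (-(L / 2))..(L / 2), Complex.exp (2 * π * Complex.I * ξ * x)
      = L * _root_.sinc (ξ * L) := by
  rcases eq_or_ne ξ 0 with rfl | hξ
  · simp [sinc_eq_real_sinc]
  rcases eq_or_ne L 0 with rfl | hL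
  · simp
  have hc : 2 * π * Complex.I * ξ ≠ 0 := by simp [pi_ne_zero, hξ]
  rw [integral_exp_mul_complex hc, sinc_eq_real_sinc,
    Real.sinc_of_ne_zero (by simp [pi_ne_zero, hξ, hL])]
  have h1 : 2 * π * Complex.I * ξ * ((L / 2 : ℝ) : ℂ) = ((π * ξ * L : ℝ) : ℂ) * Complex.I := by
    push_cast; ring
  have h2 : 2 * π * Complex.I * ξ * ((-(L / 2) : ℝ) : ℂ) = -((π * ξ * L : ℝ) : ℂ) * Complex.I := by
    push_cast; ring
  rw [h1, h2, Complex.exp_mul_I, Complex.exp_mul_I, Complex.cos_neg, Complex.sin_neg]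
  have hL' : (L : ℂ) ≠ 0 := by exact_mod_cast hL
  push_cast
  field_simp
  ring

theorem integral_cexp_neg_mul_cexp_eq_mul_sinc (a T L κ : ℝ) :
    ∫ x in (-(L / 2))..(L / 2),
        Complex.exp (-Complex.I * (2 * π * a * x / T)) * Complex.exp (Complex.I * κ * x)
      = L * _root_.sinc ((κ / (2 * π) - a / T) * L) := by
  rw [← integral_cexp_two_pi_mul_I_eq_mul_sinc]
  congr 1 with x
  rw [← Complex.exp_add]
  congr 1
  push_cast
  field_simp
  ring

theorem integral_cexp_mul_cexp_neg_eq_mul_sinc (a T L κ : ℝ) :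
    ∫ x in (-(L / 2))..(L / 2),
        Complex.exp (Complex.I * (2 * π * a * x / T)) * Complex.exp (-Complex.I * κ * x)
      = L * _root_.sinc ((κ / (2 * π) - a / T) * L) := by
  rw [← _root_.sinc_neg, ← neg_mul, neg_sub, ← integral_cexp_two_pi_mul_I_eq_mul_sinc]
  congr 1 with x
  rw [← Complex.exp_add]
  congr 1
  push_cast
  field_simp
  ring

theorem fourier_eq_comp_two_pi_mul {g G : ℝ → ℂ}
    (hG : ∀ κ : ℝ, G κ = ∫ z : ℝ, g z * Complex.exp (-Complex.I * κ * z)) :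
    FourierTransform.fourier g = fun ξ => G (2 * π * ξ) := by
  ext ξ
  rw [Real.fourier_real_eq_integral_exp_smul, hG]
  congr 1 with z
  rw [smul_eq_mul, mul_comm]
  push_cast
  ring_nf

theorem angular_fourier_inversion {g G : ℝ → ℂ} (hgint : Integrable g)
    (hG : ∀ κ : ℝ, G κ = ∫ z : ℝ, g z * Complex.exp (-Complex.I * κ * z))
    (hGint : Integrable G) {z : ℝ} (hgz : ContinuousAt g z) :
    g z = (2 * π)⁻¹ • ∫ κ : ℝ, G κ * Complex.exp (Complex.I * κ * z) := by
  have hFg := fourier_eq_comp_two_pi_mul hG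
  have hFint : Integrable (FourierTransform.fourier g) := by
    rw [hFg]
    exact hGint.comp_mul_left' (by positivity)
  rw [← hgint.fourierInv_fourier_eq hFint hgz, Real.fourierInv_eq_fourier_neg,
    Real.fourier_real_eq_integral_exp_smul, hFg, ← abs_of_pos (by positivity : 0 < (2 * π)⁻¹),
    ← Measure.integral_comp_mul_left]
  congr 1 with ξ
  rw [smul_eq_mul, mul_comm]
  push_cast
  ring_nf

theorem integral_integral_kernel_eq_integral_wavenumber {μ ν : Measure ℝ} [SFinite μ] [SFinite ν]
    {g G φ ψ : ℝ → ℂ}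
    (hg : ∀ z, g z = (2 * π)⁻¹ • ∫ κ : ℝ, G κ * Complex.exp (Complex.I * κ * z))
    (hG : Integrable G) (hφ : Integrable φ μ) (hψ : Integrable ψ ν) :
    ∫ r, ∫ s, g (r - s) * ψ r * φ s ∂μ ∂ν
      = (2 * π)⁻¹ • ∫ κ : ℝ, G κ * ((∫ r, ψ r * Complex.exp (Complex.I * κ * r) ∂ν) *
          ∫ s, φ s * Complex.exp (-Complex.I * κ * s) ∂μ) := by
  set F : ℝ × ℝ → ℝ → ℂ := fun p κ => G κ * ((ψ p.1 * Complex.exp (Complex.I * κ * p.1)) *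
    (φ p.2 * Complex.exp (-Complex.I * κ * p.2))) with hF_def
  have hF : Integrable (Function.uncurry F) ((ν.prod μ).prod volume) := by
    refine ((hψ.norm.mul_prod hφ.norm).mul_prod hG.norm).mono' ?_ (.of_forall ?_)
    · exact hG.1.comp_snd.mul
        ((hψ.1.comp_fst.comp_fst.mul (Continuous.aestronglyMeasurable (by fun_prop))).mul
          (hφ.1.comp_snd.comp_fst.mul (Continuous.aestronglyMeasurable (by fun_prop))))
    · rintro ⟨⟨r, s⟩, κ⟩
      simp [hF_def, Complex.norm_exp, mul_comm]
  have hpoint : ∀ r s, g (r - s) * ψ r * φ s = (2 * π)⁻¹ • ∫ κ, F (r, s) κ := by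
    intro r s
    rw [hg, smul_mul_assoc, smul_mul_assoc, ← integral_mul_const, ← integral_mul_const]
    congr 2 with κ
    simp only [hF_def, sub_eq_add_neg, mul_add, Complex.ofReal_add, Complex.ofReal_neg,
      Complex.exp_add]
    ring_nf
  calc ∫ r, ∫ s, g (r - s) * ψ r * φ s ∂μ ∂ν
      = (2 * π)⁻¹ • ∫ r, ∫ s, (∫ κ, F (r, s) κ) ∂μ ∂ν := by simp_rw [hpoint, integral_smul]
    _ = (2 * π)⁻¹ • ∫ p, (∫ κ, F p κ) ∂(ν.prod μ) := by
      rw [integral_prod (fun p : ℝ × ℝ => ∫ κ, F p κ) hF.integral_prod_left]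
    _ = (2 * π)⁻¹ • ∫ κ, (∫ p, F p κ ∂(ν.prod μ)) := by rw [integral_integral_swap hF]
    _ = _ := by simp only [hF_def, integral_const_mul, ← integral_prod_mul]

theorem wdm_coupling_coefficient_wavenumber_domain_general
    (c : ℕ → ℝ)
    (Ls Lr : ℝ) (hLs : 0 < Ls) (hLr : 0 < Lr)
    (g : ℝ → ℂ) (hgcont : Continuous g) (hgint : Integrable g)
    (G : ℝ → ℂ)
    (hG : ∀ κ : ℝ, G κ = ∫ z : ℝ, g z * Complex.exp (-Complex.I * κ * z))
    (hGint : Integrable G)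
    (n m : ℕ) :
    (∫ r in (-(Lr / 2))..(Lr / 2), ∫ s in (-(Ls / 2))..(Ls / 2),
        g (r - s) * Complex.exp (-Complex.I * (2 * π * c n * r / Ls)) *
          ((1 / Real.sqrt Ls : ℝ) : ℂ) * Complex.exp (Complex.I * (2 * π * c m * s / Ls)))
      = ((Real.sqrt Ls * Lr / (2 * π) : ℝ) : ℂ) *
          ∫ κ : ℝ, G κ * ((_root_.sinc ((κ / (2 * π) - c n / Ls) * Lr) : ℝ) : ℂ) *
            ((_root_.sinc ((κ / (2 * π) - c m / Ls) * Ls) : ℝ) : ℂ) := by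
  have hr : -(Lr / 2) ≤ Lr / 2 := by linarith
  have hs : -(Ls / 2) ≤ Ls / 2 := by linarith
  have hcoupling := integral_integral_kernel_eq_integral_wavenumber
    (fun z => angular_fourier_inversion hgint hG hGint hgcont.continuousAt) hGint
    (φ := fun s => ((1 / Real.sqrt Ls : ℝ) : ℂ) * Complex.exp (Complex.I * (2 * π * c m * s / Ls)))
    (ψ := fun r => Complex.exp (-Complex.I * (2 * π * c n * r / Ls)))
    (μ := volume.restrict (Set.Ioc (-(Ls / 2)) (Ls / 2)))
    (ν := volume.restrict (Set.Ioc (-(Lr / 2)) (Lr / 2)))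
    (Continuous.integrableOn_Ioc (by fun_prop)) (Continuous.integrableOn_Ioc (by fun_prop))
  have hΨ (κ : ℝ) : ∫ r in Set.Ioc (-(Lr / 2)) (Lr / 2),
      Complex.exp (-Complex.I * (2 * π * c n * r / Ls)) * Complex.exp (Complex.I * κ * r)
        = Lr * _root_.sinc ((κ / (2 * π) - c n / Ls) * Lr) := by
    rw [← intervalIntegral.integral_of_le hr, integral_cexp_neg_mul_cexp_eq_mul_sinc]
  have hΦ (κ : ℝ) : ∫ s in Set.Ioc (-(Ls / 2)) (Ls / 2),
      ((1 / Real.sqrt Ls : ℝ) : ℂ) * Complex.exp (Complex.I * (2 * π * c m * s / Ls)) *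
        Complex.exp (-Complex.I * κ * s)
        = ((1 / Real.sqrt Ls : ℝ) : ℂ) * (Ls * _root_.sinc ((κ / (2 * π) - c m / Ls) * Ls)) := by
    rw [← intervalIntegral.integral_of_le hs, ← integral_cexp_mul_cexp_neg_eq_mul_sinc,
      ← intervalIntegral.integral_const_mul]
    simp only [mul_assoc]
  simp only [hΨ, hΦ, ← mul_assoc] at hcoupling
  simp only [intervalIntegral.integral_of_le hr, intervalIntegral.integral_of_le hs, hcoupling,
    ← integral_const_mul, ← integral_smul]
  have hk : ((1 / Real.sqrt Ls : ℝ) : ℂ) * Ls = Real.sqrt Ls := by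
    rw [← Complex.ofReal_mul, one_div_mul_eq_div, Real.div_sqrt]
  congr 1 with κ
  rw [Complex.real_smul]
  push_cast at hk ⊢
  linear_combination (2 * π : ℂ)⁻¹ * Lr * G κ * _root_.sinc ((κ / (2 * π) - c n / Ls) * Lr) *
    _root_.sinc ((κ / (2 * π) - c m / Ls) * Ls) * hk

/-- Wavenumber-domain reformulation of the WDM coupling coefficients (eqs. (55)–(56) of the
paper): the spatial double integral of `g(r−s)` against the transmit and receive Fourier
modes equals `(√L_s L_r/(2π)) ∫ G(κ) sinc((κ/(2π) − c_n/L_s)L_r) sinc((κ/(2π) − c_m/L_s)L_s) dκ`. -/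
theorem wdm_coupling_coefficient_wavenumber_domain
    (N : ℕ) (hN : Odd N) (hNpos : 0 < N)
    (c : ℕ → ℝ) (hc : ∀ k, c k = (k : ℝ) - 1 - ((N : ℝ) - 1) / 2)
    (Ls Lr : ℝ) (hLs : 0 < Ls) (hLr : 0 < Lr)
    (g : ℝ → ℂ) (hgcont : Continuous g) (hgint : Integrable g)
    (G : ℝ → ℂ)
    (hG : ∀ κ : ℝ, G κ = ∫ z : ℝ, g z * Complex.exp (-Complex.I * κ * z))
    (hGint : Integrable G)
    (n m : ℕ) (hn : n ∈ Finset.Icc 1 N) (hm : m ∈ Finset.Icc 1 N) :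
    (∫ r in (-(Lr / 2))..(Lr / 2), ∫ s in (-(Ls / 2))..(Ls / 2),
        g (r - s) * Complex.exp (-Complex.I * (2 * π * c n * r / Ls)) *
          ((1 / Real.sqrt Ls : ℝ) : ℂ) * Complex.exp (Complex.I * (2 * π * c m * s / Ls)))
      = ((Real.sqrt Ls * Lr / (2 * π) : ℝ) : ℂ) *
          ∫ κ : ℝ, G κ * ((_root_.sinc ((κ / (2 * π) - c n / Ls) * Lr) : ℝ) : ℂ) *
            ((_root_.sinc ((κ / (2 * π) - c m / Ls) * Ls) : ℝ) : ℂ) :=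
  wdm_coupling_coefficient_wavenumber_domain_general c Ls Lr hLs hLr g hgcont hgint G hG hGint n m
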